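/- Let h₁, h₂ be i.i.d. standard Gaussian, γ > 0 and R ∈ [−1,1]. Define ε(γ,R) = E[(h₁ − max(0, γRh₁ + γ√(1−R²)h₂))²]. Then ε(γ,R) = 1 + γ²/2 − γR. -/

import Mathlib

/-!
Replacing `p` by `-p` preserves the product of centred Gaussians and turns the student's
pre-activation `u = a h₁ + b h₂` into `-u`. Averaging the integrand over `p` and `-p`, the identities
`max 0 u - max 0 (-u) = u` and `(max 0 u)² + (max 0 (-u))² = u²` remove the ReLU, leaving
`h₁² - h₁ u + u² / 2`, whose mean is `1 - a + (a² + b²) / 2` with `a² + b² = γ²`.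
-/

open MeasureTheory ProbabilityTheory Real
open scoped NNReal

namespace MeasureTheory

instance Measure.prod.instIsNegInvariant {α β : Type*} [MeasurableSpace α] [MeasurableSpace β]
    [Neg α] [Neg β] [MeasurableNeg α] [MeasurableNeg β] (μ : Measure α) (ν : Measure β)
    [SFinite μ] [SFinite ν] [μ.IsNegInvariant] [ν.IsNegInvariant] :
    (μ.prod ν).IsNegInvariant where
  neg_eq_self := by
    change Measure.map (Prod.map Neg.neg Neg.neg) _ = _
    rw [← Measure.map_prod_map μ ν measurable_neg measurable_neg, Measure.map_neg_eq_self,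
      Measure.map_neg_eq_self]

lemma integral_eq_integral_add_comp_neg_div_two {G E : Type*} [MeasurableSpace G] [AddGroup G]
    [MeasurableNeg G] [NormedAddCommGroup E] [NormedSpace ℝ E] {μ : Measure G}
    [μ.IsNegInvariant] {f : G → E} (hf : Integrable f μ) :
    ∫ x, f x ∂μ = ∫ x, (2 : ℝ)⁻¹ • (f x + f (-x)) ∂μ := by
  rw [integral_smul, integral_add hf hf.comp_neg, integral_neg_eq_self, ← two_smul ℝ,
    inv_smul_smul₀ two_ne_zero]

end MeasureTheory

lemma sq_sub_max_zero_add_sq_neg_sub_max_zero_neg {α : Type*} [CommRing α] [LinearOrder α]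
    [IsStrictOrderedRing α] (x u : α) :
    (x - max 0 u) ^ 2 + (-x - max 0 (-u)) ^ 2 = 2 * x ^ 2 - 2 * x * u + u ^ 2 := by
  rcases le_total 0 u with hu | hu
  · rw [max_eq_right hu, max_eq_left (neg_nonpos.mpr hu)]; ring
  · rw [max_eq_left hu, max_eq_right (neg_nonneg.mpr hu)]; ring

namespace ProbabilityTheory

instance instIsNegInvariantGaussianReal (v : ℝ≥0) : (gaussianReal 0 v).IsNegInvariant where
  neg_eq_self := by
    rw [Measure.neg_def, show (Neg.neg : ℝ → ℝ) = fun x ↦ -x from rfl, gaussianReal_map_neg,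
      neg_zero]

lemma integral_sq_gaussianReal (μ : ℝ) (v : ℝ≥0) : ∫ x, x ^ 2 ∂gaussianReal μ v = μ ^ 2 + v := by
  have h := variance_eq_sub (memLp_id_gaussianReal (μ := μ) (v := v) 2)
  simp only [variance_id_gaussianReal, Pi.pow_apply, id, integral_id_gaussianReal] at h
  linarith

lemma integral_quadratic_gaussianReal_prod (v w : ℝ≥0) (c₁ c₂ c₃ : ℝ) :
    ∫ p : ℝ × ℝ, (c₁ * p.1 ^ 2 + c₂ * (p.1 * p.2) + c₃ * p.2 ^ 2)
      ∂(gaussianReal 0 v).prod (gaussianReal 0 w) = c₁ * v + c₃ * w := by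
  have hX : MemLp (fun p : ℝ × ℝ ↦ p.1) 2 ((gaussianReal 0 v).prod (gaussianReal 0 w)) :=
    (memLp_id_gaussianReal 2).comp_fst _
  have hY : MemLp (fun p : ℝ × ℝ ↦ p.2) 2 ((gaussianReal 0 v).prod (gaussianReal 0 w)) :=
    (memLp_id_gaussianReal 2).comp_snd _
  have hXX : Integrable (fun p : ℝ × ℝ ↦ c₁ * p.1 ^ 2)
      ((gaussianReal 0 v).prod (gaussianReal 0 w)) :=
    hX.integrable_sq.const_mul c₁
  have hXY : Integrable (fun p : ℝ × ℝ ↦ c₂ * (p.1 * p.2))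
      ((gaussianReal 0 v).prod (gaussianReal 0 w)) :=
    (hX.integrable_mul hY).const_mul c₂
  have hYY : Integrable (fun p : ℝ × ℝ ↦ c₃ * p.2 ^ 2)
      ((gaussianReal 0 v).prod (gaussianReal 0 w)) :=
    hY.integrable_sq.const_mul c₃
  have hcross : ∫ p : ℝ × ℝ, p.1 * p.2 ∂(gaussianReal 0 v).prod (gaussianReal 0 w) = 0 := by
    rw [integral_prod_mul (fun x ↦ x) (fun y ↦ y), integral_id_gaussianReal, zero_mul]
  rw [integral_add (by exact hXX.add hXY) hYY, integral_add hXX hXY, integral_const_mul,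
    integral_const_mul, integral_const_mul, hcross, integral_fun_fst (fun x ↦ x ^ 2),
    integral_fun_snd (fun y ↦ y ^ 2)]
  simp [integral_sq_gaussianReal]

end ProbabilityTheory

theorem stmt9_general (γ R : ℝ) (hR : R ∈ Set.Icc (-1 : ℝ) 1) :
    ∫ p : ℝ × ℝ,
        (p.1 - max 0 (γ * R * p.1 + γ * Real.sqrt (1 - R ^ 2) * p.2)) ^ 2
        ∂((gaussianReal 0 1).prod (gaussianReal 0 1)) =
      1 + γ ^ 2 / 2 - γ * R := by
  set a := γ * R
  set b := γ * √(1 - R ^ 2) with hb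
  have hb2 : b ^ 2 = γ ^ 2 * (1 - R ^ 2) := by
    rw [hb, mul_pow, sq_sqrt (by nlinarith [hR.1, hR.2])]
  have hX : MemLp (fun p : ℝ × ℝ ↦ p.1) 2 ((gaussianReal 0 1).prod (gaussianReal 0 1)) :=
    (memLp_id_gaussianReal 2).comp_fst _
  have hY : MemLp (fun p : ℝ × ℝ ↦ p.2) 2 ((gaussianReal 0 1).prod (gaussianReal 0 1)) :=
    (memLp_id_gaussianReal 2).comp_snd _
  have hU : MemLp (fun p : ℝ × ℝ ↦ max 0 (a * p.1 + b * p.2)) 2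
      ((gaussianReal 0 1).prod (gaussianReal 0 1)) := by
    simpa only [max_comm, Pi.add_apply] using ((hX.const_mul a).add (hY.const_mul b)).pos_part
  calc _ = ∫ p : ℝ × ℝ, ((1 - a + a ^ 2 / 2) * p.1 ^ 2 + (a * b - b) * (p.1 * p.2)
          + b ^ 2 / 2 * p.2 ^ 2) ∂(gaussianReal 0 1).prod (gaussianReal 0 1) := by
        rw [integral_eq_integral_add_comp_neg_div_two (by exact (hX.sub hU).integrable_sq)]
        congr with p
        simp only [Prod.fst_neg, Prod.snd_neg, smul_eq_mul, mul_neg, ← neg_add,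
          sq_sub_max_zero_add_sq_neg_sub_max_zero_neg]
        ring
    _ = 1 + γ ^ 2 / 2 - a := by
        rw [integral_quadratic_gaussianReal_prod, NNReal.coe_one]
        linear_combination hb2 / 2

/-- Generalization error of a ReLU student against a linear teacher:
E[(h₁ − max(0, γRh₁ + γ√(1−R²)h₂))²] = 1 + γ²/2 − γR for h₁, h₂ i.i.d. N(0,1). -/
theorem stmt9 (γ R : ℝ) (hγ : 0 < γ) (hR : R ∈ Set.Icc (-1 : ℝ) 1) :
    ∫ p : ℝ × ℝ,
        (p.1 - max 0 (γ * R * p.1 + γ * Real.sqrt (1 - R ^ 2) * p.2)) ^ 2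
        ∂((gaussianReal 0 1).prod (gaussianReal 0 1)) =
      1 + γ ^ 2 / 2 - γ * R :=
  stmt9_general γ R hR
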